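/- arXiv:1206.3783 — 3 statements merged into one kernel-verified Lean document; each statement's English description precedes it below -/
import Mathlib

section
/- Let A be the polynomial ring over Q in variables x_{i,j} (for integers i ≤ j+2 with i+j even, with conventions x_{0,0} = g and x_{i,j} = 0 if i < 0 or j < 0 or j > 2g-2) and y, bigraded so that x_{i,j} has bidegree (i,j) and y has bidegree (0,2). Define E(α) = x_{2,0}·α, H(α) = (i-g)·α for α of bidegree (i,j), and F = (1/2)Σ_{i,j,k,l} (y·x_{i-1,j-1}·x_{k-1,l-1} - C(i+k-2, i-1)·x_{i+k-2,j+l}) ∂x_{i,j} ∂x_{k,l} + Σ_{i,j} x_{i-2,j} ∂x_{i,j}. Then [E,F] = H, [H,E] = 2E, and [H,F] = -2F, so E, F, H define an sl2-representation on A. -/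
open MvPolynomial Finset

/-- The index set of the tautological variables `x_{i,j}`: pairs `(i,j)` with
`0 ≤ i ≤ j + 2`, `0 ≤ j ≤ 2g-2`, `i + j` even, and `(i,j) ≠ (0,0)`. -/
abbrev Vars (g : ℕ) :=
  {p : Fin (2 * g + 1) × Fin (2 * g + 1) //
    (p.1 : ℕ) ≤ (p.2 : ℕ) + 2 ∧ (p.2 : ℕ) ≤ 2 * g - 2 ∧
      ((p.1 : ℕ) + (p.2 : ℕ)) % 2 = 0 ∧ ¬((p.1 : ℕ) = 0 ∧ (p.2 : ℕ) = 0)}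

/-- Variables of the ring `A`: the `x_{i,j}` together with `y`. -/
abbrev Idx (g : ℕ) := Vars g ⊕ Unit

/-- The bigraded polynomial ring `A = ℚ[{x_{i,j}}, y]` (with `x_{0,0} = g` and `x_{i,j} = 0`
for out-of-range indices, implemented via the total function `xv`). -/
abbrev A (g : ℕ) := MvPolynomial (Idx g) ℚ

/-- The class `y` (i.e. `ψ`), of bidegree `(0,2)`. -/
noncomputable def Y (g : ℕ) : A g := X (Sum.inr ())

/-- The element `x_{i,j}` of `A`, for arbitrary integers `i, j`: the corresponding variable
when the indices are in range, `g` when `(i,j) = (0,0)`, and `0` otherwise. -/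
noncomputable def xv (g : ℕ) (i j : ℤ) : A g :=
  if h : 0 ≤ i ∧ 0 ≤ j ∧ i ≤ j + 2 ∧ j ≤ 2 * (g : ℤ) - 2 ∧ (i + j) % 2 = 0 ∧
      ¬(i = 0 ∧ j = 0) then
    X (Sum.inl ⟨(⟨i.toNat, by omega⟩, ⟨j.toNat, by omega⟩),
      show i.toNat ≤ j.toNat + 2 by omega,
      show j.toNat ≤ 2 * g - 2 by omega,
      show (i.toNat + j.toNat) % 2 = 0 by omega,
      show ¬(i.toNat = 0 ∧ j.toNat = 0) by omega⟩)
  else if i = 0 ∧ j = 0 then (g : A g) else 0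

/-- First index of a variable. -/
def vi {g : ℕ} (v : Vars g) : ℤ := (v.1.1 : ℕ)

/-- Second index of a variable. -/
def vj {g : ℕ} (v : Vars g) : ℤ := (v.1.2 : ℕ)

/-- Binomial coefficient `C(n, k)` for integers, zero when `k < 0`. -/
noncomputable def binom (n k : ℤ) : ℚ :=
  if 0 ≤ k then (∏ s ∈ Finset.range k.toNat, ((n : ℚ) - s)) / k.toNat.factorial else 0

/-- The operator `E`: multiplication by `x_{2,0}`. -/
noncomputable def Eop (g : ℕ) : Module.End ℚ (A g) := LinearMap.mulLeft ℚ (xv g 2 0)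

/-- The differential operator
`F = (1/2) Σ (y x_{i-1,j-1} x_{k-1,l-1} - C(i+k-2, i-1) x_{i+k-2,j+l}) ∂x_{i,j} ∂x_{k,l}
      + Σ x_{i-2,j} ∂x_{i,j}`. -/
noncomputable def Fop (g : ℕ) : Module.End ℚ (A g) :=
  (1 / 2 : ℚ) • (∑ v : Vars g, ∑ w : Vars g,
      LinearMap.mulLeft ℚ
          (Y g * xv g (vi v - 1) (vj v - 1) * xv g (vi w - 1) (vj w - 1) -
            C (binom (vi v + vi w - 2) (vi v - 1)) * xv g (vi v + vi w - 2) (vj v + vj w)) ∘ₗ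
        (pderiv (Sum.inl v)).toLinearMap ∘ₗ (pderiv (Sum.inl w)).toLinearMap) +
    ∑ v : Vars g,
      LinearMap.mulLeft ℚ (xv g (vi v - 2) (vj v)) ∘ₗ (pderiv (Sum.inl v)).toLinearMap

/-- The bigrading: `x_{i,j}` has weight `(i,j)` and `y` has weight `(0,2)`. -/
def wt (g : ℕ) : Idx g → ℤ × ℤ := Sum.elim (fun v => (vi v, vj v)) (fun _ => (0, 2))

/-!
Since `E` is multiplication by the variable `x_{2,0}`, the Leibniz rule makes `[F, E]` the
first-order operator `½ Σ_v (c_{v,u} + c_{u,v}) ∂_v + b_u` with `u = (2,0)`, where `c` and `b`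
are the second- and first-order coefficients of `F`. Because `x_{1,-1} = 0` and
`C(i, i-1) = C(i, 1) = i`, both `c_{v,u}` and `c_{u,v}` equal `-i_v x_v`, and `b_u = x_{0,0} = g`;
so `[F, E] = g - Σ_v i_v x_v ∂_v`, which is `g - i` on bidegree `(i, j)` by Euler's identity for
the first grading. The degree shifts hold because each coefficient of `F` has first degree `2`
less than the product of the variables it differentiates.
-/

namespace MvPolynomial

variable {R σ ι M : Type*} [CommSemiring R]

theorem IsWeightedHomogeneous.sum_smul_X_mul_pderiv [Fintype σ] [AddCommMonoid M]
    {w : σ → M} {n : M} {φ : MvPolynomial σ R} (f : M →+ R) (h : φ.IsWeightedHomogeneous w n) :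
    ∑ i : σ, f (w i) • (X i * pderiv i φ) = f n • φ := by
  classical
  rw [← mem_weightedHomogeneousSubmodule, weightedHomogeneousSubmodule_eq_finsupp_supported,
    AddMonoidAlgebra.supported_eq_span_single] at h
  refine Submodule.span_induction ?_ ?_ (fun p q _ _ hp hq ↦ ?_) (fun r p _ h ↦ ?_) h
  · rintro _ ⟨m, hm, rfl⟩
    rw [Set.mem_ofPred, Finsupp.weight_apply,
      Finsupp.sum_fintype _ (fun i c ↦ c • w i) fun _ ↦ zero_nsmul _] at hm
    simp_rw [single_eq_monomial, X_mul_pderiv_monomial, ← hm, map_sum, map_nsmul,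
      Finset.sum_smul, smul_assoc, smul_comm (f _)]
  · simp
  · simp_rw [map_add, mul_add, smul_add, Finset.sum_add_distrib, hp, hq]
  · simp_rw [(pderiv _).map_smul, mul_smul_comm, smul_comm _ r, ← Finset.smul_sum, h]

variable {e : ι → σ}

section ProductRule

variable [DecidableEq ι]

theorem pderiv_X_mul_of_injective (he : e.Injective) (u v : ι) (p : MvPolynomial σ R) :
    pderiv (e v) (X (e u) * p) = (if u = v then p else 0) + X (e u) * pderiv (e v) p := by
  classical
  rw [pderiv_mul, pderiv_X, Pi.single_apply, he.eq_iff]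
  split_ifs <;> simp

variable [Fintype ι]

theorem sum_mul_pderiv_X_mul (he : e.Injective) (b : ι → MvPolynomial σ R) (u : ι)
    (p : MvPolynomial σ R) :
    ∑ v, b v * pderiv (e v) (X (e u) * p) = X (e u) * ∑ v, b v * pderiv (e v) p + b u * p := by
  simp [pderiv_X_mul_of_injective he, mul_add, Finset.sum_add_distrib, Finset.mul_sum,
    mul_left_comm, add_comm]

theorem sum_sum_mul_pderiv_pderiv_X_mul (he : e.Injective) (c : ι → ι → MvPolynomial σ R)
    (u : ι) (p : MvPolynomial σ R) :
    ∑ v, ∑ w, c v w * pderiv (e v) (pderiv (e w) (X (e u) * p)) =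
      X (e u) * ∑ v, ∑ w, c v w * pderiv (e v) (pderiv (e w) p) +
        ∑ v, (c v u + c u v) * pderiv (e v) p := by
  simp only [pderiv_X_mul_of_injective he, map_add, apply_ite, map_zero, mul_add, mul_zero,
    Finset.sum_add_distrib, Finset.sum_ite_irrel, Finset.sum_const_zero, Finset.sum_ite_eq,
    Finset.mem_univ, if_true, add_mul, Finset.mul_sum, mul_left_comm (X (e u))]
  abel

end ProductRule

variable [Fintype ι] [AddCommGroup M] {w : σ → M} {m d : M} {p : MvPolynomial σ R}

theorem IsWeightedHomogeneous.sum_mul_pderiv (hp : p.IsWeightedHomogeneous w m) (e : ι → σ)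
    {b : ι → MvPolynomial σ R} (hb : ∀ v, (b v).IsWeightedHomogeneous w (w (e v) + d)) :
    (∑ v, b v * pderiv (e v) p).IsWeightedHomogeneous w (m + d) :=
  IsWeightedHomogeneous.sum _ _ _ fun v _ ↦ by
    convert (hb v).mul (hp.pderiv (sub_add_cancel m (w (e v)))) using 1
    abel

theorem IsWeightedHomogeneous.sum_sum_mul_pderiv_pderiv (hp : p.IsWeightedHomogeneous w m)
    (e : ι → σ) {c : ι → ι → MvPolynomial σ R}
    (hc : ∀ v v', (c v v').IsWeightedHomogeneous w (w (e v) + w (e v') + d)) :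
    (∑ v, ∑ v', c v v' * pderiv (e v) (pderiv (e v') p)).IsWeightedHomogeneous w (m + d) :=
  IsWeightedHomogeneous.sum _ _ _ fun v _ ↦ IsWeightedHomogeneous.sum _ _ _ fun v' _ ↦ by
    have hpp := (hp.pderiv (sub_add_cancel m (w (e v')))).pderiv
      (sub_add_cancel (m - w (e v')) (w (e v)))
    convert (hc v v').mul hpp using 1
    abel

end MvPolynomial

theorem binom_natCast (n k : ℕ) : binom n k = n.choose k := by
  rw [binom, if_pos (by positivity), Int.toNat_natCast, Nat.cast_choose_eq_descPochhammer_div,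
    descPochhammer_eval_eq_prod_range]
  push_cast
  rfl

theorem binom_natCast_sub_one (n : ℕ) : binom n (n - 1) = n := by
  cases n with
  | zero => simp [binom]
  | succ m => simpa using binom_natCast (m + 1) m

noncomputable def Fop.secondOrderCoeff (g : ℕ) (v w : Vars g) : A g :=
  Y g * xv g (vi v - 1) (vj v - 1) * xv g (vi w - 1) (vj w - 1) -
    C (binom (vi v + vi w - 2) (vi v - 1)) * xv g (vi v + vi w - 2) (vj v + vj w)

noncomputable def Fop.firstOrderCoeff (g : ℕ) (v : Vars g) : A g := xv g (vi v - 2) (vj v)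

def x₂₀ {g : ℕ} (hg : 1 ≤ g) : Vars g :=
  ⟨(⟨2, by omega⟩, ⟨0, by omega⟩), by simp⟩

section FormalAction

open Fop

variable {g : ℕ}

theorem xv_vi_vj (v : Vars g) : xv g (vi v) (vj v) = X (Sum.inl v) := by
  obtain ⟨h1, h2, h3, h4⟩ := v.2
  rw [xv, dif_pos (by unfold vi vj; omega)]
  rfl

theorem xv_zero_zero : xv g 0 0 = g := by
  rw [xv, dif_neg (by omega), if_pos ⟨rfl, rfl⟩]

theorem xv_one_neg_one : xv g 1 (-1) = 0 := by
  rw [xv, dif_neg (by omega), if_neg (by omega)]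

theorem isWeightedHomogeneous_xv (i j : ℤ) :
    (xv g i j).IsWeightedHomogeneous (wt g) (i, j) := by
  rw [xv]
  split_ifs with h h0
  · convert isWeightedHomogeneous_X ℚ (wt g) _ <;> simp [wt, vi, vj] <;> omega
  · obtain ⟨rfl, rfl⟩ := h0
    rw [← map_natCast (C : ℚ →+* A g)]
    exact isWeightedHomogeneous_C (wt g) (g : ℚ)
  · exact isWeightedHomogeneous_zero ℚ (wt g) _

theorem xv_two_zero (hg : 1 ≤ g) : xv g 2 0 = X (Sum.inl (x₂₀ hg)) :=
  xv_vi_vj (x₂₀ hg)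

theorem Fop_apply (p : A g) :
    Fop g p = (1 / 2 : ℚ) • (∑ v : Vars g, ∑ w : Vars g,
        secondOrderCoeff g v w * pderiv (Sum.inl v) (pderiv (Sum.inl w) p)) +
      ∑ v : Vars g, firstOrderCoeff g v * pderiv (Sum.inl v) p := by
  simp [Fop, secondOrderCoeff, firstOrderCoeff, LinearMap.sum_apply]

theorem Fop_X_mul (u : Vars g) (p : A g) :
    Fop g (X (Sum.inl u) * p) = X (Sum.inl u) * Fop g p +
      ((1 / 2 : ℚ) • ∑ v : Vars g,
          (secondOrderCoeff g v u + secondOrderCoeff g u v) * pderiv (Sum.inl v) p +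
        firstOrderCoeff g u * p) := by
  rw [Fop_apply, Fop_apply, sum_sum_mul_pderiv_pderiv_X_mul Sum.inl_injective,
    sum_mul_pderiv_X_mul Sum.inl_injective]
  simp only [smul_add, mul_add, mul_smul_comm]
  abel

theorem secondOrderCoeff_x₂₀_right (hg : 1 ≤ g) (v : Vars g) :
    secondOrderCoeff g v (x₂₀ hg) = -((vi v : ℚ) • X (Sum.inl v)) := by
  simp only [secondOrderCoeff, show vi (x₂₀ hg) = 2 from rfl, show vj (x₂₀ hg) = 0 from rfl]
  norm_num [xv_one_neg_one, xv_vi_vj, smul_eq_C_mul]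
  rw [show vi v = (v.1.1 : ℕ) from rfl, binom_natCast_sub_one]
  simp

theorem secondOrderCoeff_x₂₀_left (hg : 1 ≤ g) (v : Vars g) :
    secondOrderCoeff g (x₂₀ hg) v = -((vi v : ℚ) • X (Sum.inl v)) := by
  simp only [secondOrderCoeff, show vi (x₂₀ hg) = 2 from rfl, show vj (x₂₀ hg) = 0 from rfl]
  norm_num [xv_one_neg_one, xv_vi_vj, binom, smul_eq_C_mul]

theorem firstOrderCoeff_x₂₀ (hg : 1 ≤ g) : firstOrderCoeff g (x₂₀ hg) = g := by
  simp only [firstOrderCoeff, show vi (x₂₀ hg) = 2 from rfl, show vj (x₂₀ hg) = 0 from rfl]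
  norm_num [xv_zero_zero]

theorem Fop_xv_two_zero_mul (hg : 1 ≤ g) (p : A g) :
    Fop g (xv g 2 0 * p) = xv g 2 0 * Fop g p +
      ((g : ℚ) • p - ∑ v : Vars g, (vi v : ℚ) • (X (Sum.inl v) * pderiv (Sum.inl v) p)) := by
  have hsym : (1 / 2 : ℚ) • ∑ v : Vars g, (secondOrderCoeff g v (x₂₀ hg) +
      secondOrderCoeff g (x₂₀ hg) v) * pderiv (Sum.inl v) p =
      -∑ v : Vars g, (vi v : ℚ) • (X (Sum.inl v) * pderiv (Sum.inl v) p) := by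
    rw [Finset.smul_sum, ← Finset.sum_neg_distrib]
    refine Finset.sum_congr rfl fun v _ ↦ ?_
    rw [secondOrderCoeff_x₂₀_left, secondOrderCoeff_x₂₀_right, add_mul, neg_mul, smul_mul_assoc]
    module
  rw [xv_two_zero hg, Fop_X_mul, hsym, firstOrderCoeff_x₂₀, ← nsmul_eq_mul,
    ← Nat.cast_smul_eq_nsmul ℚ, neg_add_eq_sub]

theorem sum_vi_smul_X_mul_pderiv {i j : ℤ} {α : A g}
    (hα : α.IsWeightedHomogeneous (wt g) (i, j)) :
    ∑ v : Vars g, (vi v : ℚ) • (X (Sum.inl v) * pderiv (Sum.inl v) α) = (i : ℚ) • α := by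
  simpa [Fintype.sum_sum_type, wt] using
    hα.sum_smul_X_mul_pderiv ((Int.castAddHom ℚ).comp (AddMonoidHom.fst ℤ ℤ))

theorem Eop_Fop_sub_Fop_Eop (hg : 1 ≤ g) {i j : ℤ} {α : A g}
    (hα : α.IsWeightedHomogeneous (wt g) (i, j)) :
    Eop g (Fop g α) - Fop g (Eop g α) = ((i : ℚ) - g) • α := by
  change xv g 2 0 * Fop g α - Fop g (xv g 2 0 * α) = _
  rw [Fop_xv_two_zero_mul hg, sum_vi_smul_X_mul_pderiv hα, sub_smul]
  abel

theorem isWeightedHomogeneous_secondOrderCoeff (v w : Vars g) :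
    (secondOrderCoeff g v w).IsWeightedHomogeneous (wt g)
      (wt g (Sum.inl v) + wt g (Sum.inl w) + (-2, 0)) := by
  have hY := ((isWeightedHomogeneous_X ℚ (wt g) (Sum.inr ())).mul
    (isWeightedHomogeneous_xv (vi v - 1) (vj v - 1))).mul
    (isWeightedHomogeneous_xv (vi w - 1) (vj w - 1))
  have hx := (isWeightedHomogeneous_xv (g := g) (vi v + vi w - 2) (vj v + vj w)).C_mul
    (binom (vi v + vi w - 2) (vi v - 1))
  have hwt : wt g (Sum.inl v) + wt g (Sum.inl w) + (-2, 0) = (vi v + vi w - 2, vj v + vj w) := by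
    simp [wt, sub_eq_add_neg]
  have hwtY : wt g (Sum.inr ()) + (vi v - 1, vj v - 1) + (vi w - 1, vj w - 1) =
      (vi v + vi w - 2, vj v + vj w) := by
    simp only [wt, Sum.elim_inr, Prod.mk_add_mk, Prod.mk.injEq]
    constructor <;> ring
  rw [hwtY] at hY
  rw [hwt]
  exact hY.sub hx

theorem isWeightedHomogeneous_firstOrderCoeff (v : Vars g) :
    (firstOrderCoeff g v).IsWeightedHomogeneous (wt g) (wt g (Sum.inl v) + (-2, 0)) := by
  rw [show wt g (Sum.inl v) + (-2, 0) = (vi v - 2, vj v) by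
    simp [wt, sub_eq_add_neg]]
  exact isWeightedHomogeneous_xv _ _

theorem isWeightedHomogeneous_Fop {m : ℤ × ℤ} {α : A g}
    (hα : α.IsWeightedHomogeneous (wt g) m) :
    (Fop g α).IsWeightedHomogeneous (wt g) (m + (-2, 0)) := by
  rw [Fop_apply]
  refine IsWeightedHomogeneous.add ?_ ?_
  · exact (weightedHomogeneousSubmodule ℚ (wt g) _).smul_mem _
      (hα.sum_sum_mul_pderiv_pderiv Sum.inl isWeightedHomogeneous_secondOrderCoeff)
  · exact hα.sum_mul_pderiv Sum.inl isWeightedHomogeneous_firstOrderCoeff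

end FormalAction

/-- `[H,E] = 2E` and `[H,F] = -2F` are encoded as `E` and `F` shifting the first degree by
`+2` and `-2`. -/
theorem formal_sl2_relations (g : ℕ) (hg : 2 ≤ g) (i j : ℤ) (α : A g)
    (hα : α ∈ weightedHomogeneousSubmodule ℚ (wt g) (i, j)) :
    Eop g (Fop g α) - Fop g (Eop g α) = ((i : ℚ) - (g : ℚ)) • α ∧
      Eop g α ∈ weightedHomogeneousSubmodule ℚ (wt g) (i + 2, j) ∧
      Fop g α ∈ weightedHomogeneousSubmodule ℚ (wt g) (i - 2, j) := by
  simp only [mem_weightedHomogeneousSubmodule] at hα ⊢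
  refine ⟨Eop_Fop_sub_Fop_Eop (by omega) hα, ?_, ?_⟩
  · rw [show (i + 2, j) = (2, 0) + (i, j) by simp [add_comm]]
    exact (isWeightedHomogeneous_xv 2 0).mul hα
  · rw [show (i - 2, j) = (i, j) + (-2, 0) by simp [sub_eq_add_neg]]
    exact isWeightedHomogeneous_Fop hα
end

section
/- The correspondence λ = (i₁ ≥ i₂ ≥ ... ≥ i_m) ⊢ k (a partition of k, 0 ≤ k ≤ g-1) ↦ λ' = (2i₁ + g - 1 - k, 2i₂, ..., 2i_m, 1, 1, ..., 1) with g-1-k ones, yields a partition of 2g-2 for every such λ; moreover the map λ ↦ λ' is injective on the disjoint union of partitions of k for 0 ≤ k ≤ g-1. -/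
/-!
With `t = g - 1 - k`, the parts of `λ'` add up to `(2i₁ + t) + 2(k - i₁) + t = 2g - 2`; they are
positive because the parts of `λ` are, except that the head `2i₁ + t` of the empty partition
is `g - 1 ≥ 1`. The head is the largest part of `λ'`. Removing it leaves the doubled parts,
which are even, and exactly `t` ones, so `λ'` determines `t`, hence `k`, then `i₁`, and then
the remaining parts of `λ`.
-/

/-- The map `λ ↦ λ'`: for a partition `λ ⊢ k` (with largest part `i₁ = λ.parts.sup`),
`λ' = (2i₁ + g - 1 - k, 2i₂, …, 2i_m, 1, …, 1)` with `g - 1 - k` ones appended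
(for `k = 0` and `λ` empty this gives `(g-1, 1^{g-1})`). -/
def lamPrime (g : ℕ) (p : Σ k : Fin g, Nat.Partition (k : ℕ)) : Multiset ℕ :=
  (2 * p.2.parts.sup + (g - 1 - (p.1 : ℕ))) ::ₘ
      (p.2.parts.erase p.2.parts.sup).map (fun x => 2 * x) +
    Multiset.replicate (g - 1 - (p.1 : ℕ)) 1

theorem Multiset.sup_mem {α : Type*} [LinearOrder α] [OrderBot α] {s : Multiset α}
    (hs : s ≠ 0) : s.sup ∈ s := by
  induction s using Multiset.induction with
  | empty => exact absurd rfl hs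
  | cons a s ih =>
    rw [Multiset.sup_cons]
    rcases eq_or_ne s 0 with rfl | hs'
    · simp
    · rcases le_total a s.sup with h | h
      · rw [sup_eq_right.2 h]; exact Multiset.mem_cons_of_mem (ih hs')
      · rw [sup_eq_left.2 h]; exact Multiset.mem_cons_self a s

namespace Nat.Partition

variable {k : ℕ} (P : Nat.Partition k)

theorem parts_ne_zero (hk : k ≠ 0) : P.parts ≠ 0 := by
  rintro h
  exact hk (by rw [← P.parts_sum, h, Multiset.sum_zero])

theorem sup_cons_erase_sup (hk : k ≠ 0) :
    P.parts.sup ::ₘ P.parts.erase P.parts.sup = P.parts :=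
  Multiset.cons_erase (Multiset.sup_mem (P.parts_ne_zero hk))

theorem sup_pos (hk : k ≠ 0) : 0 < P.parts.sup :=
  P.parts_pos (Multiset.sup_mem (P.parts_ne_zero hk))

theorem sup_add_sum_erase_sup : P.parts.sup + (P.parts.erase P.parts.sup).sum = k := by
  rcases eq_or_ne k 0 with rfl | hk
  · simp
  · rw [← Multiset.sum_cons, P.sup_cons_erase_sup hk, P.parts_sum]

theorem ext_sup_erase_sup {P Q : Nat.Partition k} (hsup : P.parts.sup = Q.parts.sup)
    (herase : P.parts.erase P.parts.sup = Q.parts.erase Q.parts.sup) : P = Q := by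
  rcases eq_or_ne k 0 with rfl | hk
  · exact Subsingleton.elim P Q
  · ext1
    rw [← P.sup_cons_erase_sup hk, ← Q.sup_cons_erase_sup hk, herase, hsup]

end Nat.Partition

section lamPrime

variable (g : ℕ) (p : Σ k : Fin g, Nat.Partition (k : ℕ))

theorem lamPrime_sum : (lamPrime g p).sum = 2 * g - 2 := by
  have hk := p.1.isLt
  have := p.2.sup_add_sum_erase_sup
  simp only [lamPrime, Multiset.sum_add, Multiset.sum_cons, Multiset.sum_replicate, smul_eq_mul,
    mul_one]
  rw [Multiset.sum_map_mul_left (f := fun x => x), Multiset.map_id']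
  omega

theorem pos_of_mem_lamPrime {g : ℕ} (hg : 2 ≤ g) (p : Σ k : Fin g, Nat.Partition (k : ℕ))
    {x : ℕ} (hx : x ∈ lamPrime g p) : 0 < x := by
  simp only [lamPrime, Multiset.mem_add, Multiset.mem_cons, Multiset.mem_map] at hx
  rcases hx with (rfl | ⟨y, hy, rfl⟩) | hx
  · rcases eq_or_ne (p.1 : ℕ) 0 with hk | hk
    · omega
    · have := p.2.sup_pos hk
      omega
  · have := p.2.parts_pos (Multiset.mem_of_mem_erase hy)
    omega
  · rw [Multiset.eq_of_mem_replicate hx]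
    exact Nat.one_pos

theorem lamPrime_sup :
    (lamPrime g p).sup = 2 * p.2.parts.sup + (g - 1 - p.1) := by
  refine le_antisymm (Multiset.sup_le.2 fun x hx => ?_)
    (Multiset.le_sup (Multiset.mem_add.2 (.inl (Multiset.mem_cons_self _ _))))
  simp only [lamPrime, Multiset.mem_add, Multiset.mem_cons, Multiset.mem_map] at hx
  rcases hx with (rfl | ⟨y, hy, rfl⟩) | hx
  · exact le_rfl
  · have := Multiset.le_sup (Multiset.mem_of_mem_erase hy)
    omega
  · obtain ⟨ht, rfl⟩ := Multiset.mem_replicate.1 hx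
    omega

theorem lamPrime_erase_sup :
    (lamPrime g p).erase (lamPrime g p).sup =
      (p.2.parts.erase p.2.parts.sup).map (2 * ·) + Multiset.replicate (g - 1 - p.1) 1 := by
  rw [lamPrime_sup, lamPrime, Multiset.cons_add, Multiset.erase_cons_head]

theorem count_one_lamPrime_erase_sup :
    ((lamPrime g p).erase (lamPrime g p).sup).count 1 = g - 1 - p.1 := by
  rw [lamPrime_erase_sup, Multiset.count_add, Multiset.count_replicate_self,
    Multiset.count_eq_zero.2, zero_add]
  simp only [Multiset.mem_map, not_exists, not_and]
  omega

theorem lamPrime_injective : Function.Injective (lamPrime g) := by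
  rintro ⟨k, P⟩ ⟨l, Q⟩ h
  have hkl : k = l := by
    have hones := congrArg (fun M => (M.erase M.sup).count 1) h
    simp only [count_one_lamPrime_erase_sup] at hones
    exact Fin.ext (by omega)
  subst hkl
  have hsup : P.parts.sup = Q.parts.sup := by
    have hhead := congrArg Multiset.sup h
    simp only [lamPrime_sup] at hhead
    omega
  have hrest := congrArg (fun M => M.erase M.sup) h
  simp only [lamPrime_erase_sup, add_left_inj] at hrest
  exact congrArg _ <| Nat.Partition.ext_sup_erase_sup hsup <|
    Multiset.map_injective (fun a b (hab : 2 * a = 2 * b) => by omega) hrest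

end lamPrime

/-- **The correspondence `λ ↦ λ'`.** For every `0 ≤ k ≤ g - 1` and every partition `λ` of
`k`, the multiset `λ'` is a partition of `2g - 2` (total sum `2g - 2`, all parts positive),
and the map `λ ↦ λ'` is injective on the disjoint union of the sets of partitions of `k`
for `0 ≤ k ≤ g - 1`. -/
theorem lamPrime_partition_and_injective (g : ℕ) (hg : 2 ≤ g) :
    (∀ p : Σ k : Fin g, Nat.Partition (k : ℕ),
        (lamPrime g p).sum = 2 * g - 2 ∧ ∀ x ∈ lamPrime g p, 0 < x) ∧
      Function.Injective (lamPrime g) :=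
  ⟨fun p => ⟨lamPrime_sum g p, fun _ => pos_of_mem_lamPrime hg p⟩, lamPrime_injective g⟩
end

section
/- Let g ≥ 2 and consider monomials in variables x_{i,j} with i ≤ j+2, i+j even, 0 ≤ j ≤ 2g-2, excluding x_{2,0}, whose total first-index sum is 2g+2 and total second-index sum is 2i. If such a monomial exists, then i > g/3, i.e., 3i ≥ g+1. (Hence mon_{(2g+2,2i)} = ∅ for i ≤ ⌊g/3⌋.) -/
open MvPolynomial Finset

/-- **Emptiness of `mon_{(2g+2,2i)}` for `i ≤ ⌊g/3⌋`.** If a monomial in the variables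
`x_{i,j}` (excluding `x_{2,0}`) times `y^s` has total first-index sum `2g+2` and total
second-index sum (including `2s`) equal to `2i`, then `3i ≥ g+1`. -/
theorem mon_empty_low_codim (g i s : ℕ) (hg : 2 ≤ g) (r : Vars g → ℕ)
    (h20 : ∀ v : Vars g, (v.1.1 : ℕ) = 2 ∧ (v.1.2 : ℕ) = 0 → r v = 0)
    (h1 : ∑ v : Vars g, r v * (v.1.1 : ℕ) = 2 * g + 2)
    (h2 : ∑ v : Vars g, r v * (v.1.2 : ℕ) + 2 * s = 2 * i) :
    g + 1 ≤ 3 * i := by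
  have key : ∑ v : Vars g, r v * (v.1.1 : ℕ) ≤ ∑ v : Vars g, 3 * (r v * (v.1.2 : ℕ)) := by
    apply Finset.sum_le_sum
    intro v _
    rcases Nat.eq_zero_or_pos (r v) with h | h
    · simp [h]
    · have hv := v.2
      have h20v := h20 v
      have : (v.1.1 : ℕ) ≤ 3 * (v.1.2 : ℕ) := by omega
      calc r v * (v.1.1 : ℕ) ≤ r v * (3 * (v.1.2 : ℕ)) := Nat.mul_le_mul_left _ this
        _ = 3 * (r v * (v.1.2 : ℕ)) := by ring
  rw [h1, ← Finset.mul_sum] at key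
  omega
end
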